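/- Let T : Fin n → Fin m → Σ be a table with 1 ≤ k ≤ n, let B = {i ∈ Fin n : |class(i)| < k}, and let s = ∑_{C} (|C| − k), the sum ranging over the duplicate classes C of size at least k. Then: (i) if |B| ≥ k, there exists a k-anonymous partition of the rows of T with cost at most m·|B|; (ii) if 0 < |B| < k and |B| + s ≥ k, there exists a k-anonymous partition with cost at most m·k; (iii) if 0 < |B| and |B| + s < k, there exists a k-anonymous partition with cost at most m·(|B| + c_min), where c_min is the minimum size of a duplicate class of size at least k (such a class exists in this case). -/

import Mathlib

/-!
Each partition consists of one mixed block `A`, containing every row whose duplicate class has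
fewer than `k` rows, together with the traces `C \ A` of the duplicate classes `C` outside it.
The traces consist of identical rows and cost nothing, so the partition costs at most `m * |A|`;
it is `k`-anonymous as soon as `|A| ≥ k` and every class meets the complement of `A` in at least
`k` rows or not at all. In (i) `A` is the set of rare rows; in (ii) it is filled up to exactly `k`
rows from the surplus `|C| - k` of the large classes `C`; in (iii) a smallest large class is merged
into it.
-/

open Finset

attribute [local instance] Classical.propDecidable

/-- The suppression cost of a set `B` of rows of table `T`. -/
noncomputable def suppCost {n : ℕ} {ι α : Type*} [Fintype ι]
    (T : Fin n → ι → α) (B : Finset (Fin n)) : ℕ :=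
  B.card *
    (Finset.univ.filter (fun j : ι => ¬ ∀ i ∈ B, ∀ i' ∈ B, T i j = T i' j)).card

/-- `P` is a partition of the rows `Fin n`. -/
def IsRowPartition {n : ℕ} (P : Finset (Finset (Fin n))) : Prop :=
  (∀ B ∈ P, B.Nonempty) ∧
  (∀ B ∈ P, ∀ B' ∈ P, B ≠ B' → Disjoint B B') ∧
  (∀ i : Fin n, ∃ B ∈ P, i ∈ B)

/-- The cost of a partition: the sum of the suppression costs of its blocks. -/
noncomputable def partCost {n : ℕ} {ι α : Type*} [Fintype ι]
    (T : Fin n → ι → α) (P : Finset (Finset (Fin n))) : ℕ :=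
  ∑ B ∈ P, suppCost T B

/-- The duplicate class of row `i`: all rows identical to row `i`. -/
noncomputable def cls {n m : ℕ} {σ : Type*} (T : Fin n → Fin m → σ) (i : Fin n) :
    Finset (Fin n) :=
  Finset.univ.filter (fun i' => ∀ j, T i' j = T i j)

section DuplicateClasses

variable {σ : Type*} {n m : ℕ} (T : Fin n → Fin m → σ)

lemma mem_cls {i i' : Fin n} : i' ∈ cls T i ↔ T i' = T i := by
  simp [cls, funext_iff]

lemma mem_cls_self (i : Fin n) : i ∈ cls T i := (mem_cls T).2 rfl

lemma cls_eq_of_mem {i i' : Fin n} (h : i' ∈ cls T i) : cls T i' = cls T i := by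
  ext x
  simp only [mem_cls, (mem_cls T).1 h]

lemma cls_eq_cls_of_mem_of_mem {i i' x : Fin n} (h : x ∈ cls T i) (h' : x ∈ cls T i') :
    cls T i = cls T i' :=
  (cls_eq_of_mem T h).symm.trans (cls_eq_of_mem T h')

lemma disjoint_cls_of_ne {i i' : Fin n} (h : cls T i ≠ cls T i') :
    Disjoint (cls T i) (cls T i') :=
  Finset.disjoint_left.2 fun _ hx hx' => h (cls_eq_cls_of_mem_of_mem T hx hx')

lemma disjoint_cls_of_not_mem {i i' : Fin n} (h : i ∉ cls T i') :
    Disjoint (cls T i) (cls T i') :=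
  disjoint_cls_of_ne T fun he => h (he ▸ mem_cls_self T i)

end DuplicateClasses

section SuppressionCost

variable {n : ℕ} {ι α : Type*} [Fintype ι] (T : Fin n → ι → α)

lemma suppCost_le (B : Finset (Fin n)) : suppCost T B ≤ B.card * Fintype.card ι :=
  Nat.mul_le_mul_left _ (Finset.card_le_univ _)

lemma suppCost_eq_zero_of_pairwise_eq {B : Finset (Fin n)}
    (h : ∀ i ∈ B, ∀ i' ∈ B, T i = T i') : suppCost T B = 0 := by
  refine Nat.mul_eq_zero.2 (Or.inr ?_)
  simp only [Finset.card_eq_zero, Finset.filter_eq_empty_iff, not_not]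
  exact fun j _ i hi i' hi' => congrFun (h i hi i' hi') j

end SuppressionCost

lemma exists_subset_biUnion_card_eq {ι α : Type*} [DecidableEq α] {s : Finset ι}
    {f : ι → Finset α} (hf : (s : Set ι).PairwiseDisjoint f) (a : ι → ℕ)
    (ha : ∀ i ∈ s, a i ≤ (f i).card) {t : ℕ} (ht : t ≤ ∑ i ∈ s, a i) :
    ∃ E ⊆ s.biUnion f, E.card = t ∧ ∀ i ∈ s, (f i ∩ E).card ≤ a i := by
  have hD : ∀ i, ∃ D ⊆ f i, i ∈ s → D.card = a i := fun i => by
    by_cases hi : i ∈ s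
    · obtain ⟨D, hD, hcard⟩ := Finset.exists_subset_card_eq (ha i hi)
      exact ⟨D, hD, fun _ => hcard⟩
    · exact ⟨∅, Finset.empty_subset _, fun h => absurd h hi⟩
  choose D hDf hDcard using hD
  have hDdisj : (s : Set ι).PairwiseDisjoint D := hf.mono_on fun i _ => hDf i
  have hU : (s.biUnion D).card = ∑ i ∈ s, a i := by
    rw [Finset.card_biUnion hDdisj]
    exact Finset.sum_congr rfl fun i hi => hDcard i hi
  obtain ⟨E, hEU, hEcard⟩ := Finset.exists_subset_card_eq (hU ▸ ht)
  refine ⟨E, hEU.trans (Finset.biUnion_mono fun i _ => hDf i), hEcard, fun i hi => ?_⟩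
  have hsub : f i ∩ E ⊆ D i := by
    intro x hx
    obtain ⟨j, hj, hxj⟩ := Finset.mem_biUnion.1 (hEU (Finset.mem_inter.1 hx).2)
    obtain rfl : i = j := by
      by_contra hne
      exact Finset.disjoint_left.1 (hf hi hj hne) (Finset.mem_inter.1 hx).1 (hDf j hxj)
    exact hxj
  exact (Finset.card_le_card hsub).trans (hDcard i hi).le

section Anonymization

variable {σ : Type*} {n m : ℕ} (T : Fin n → Fin m → σ)

noncomputable def classPartition (A : Finset (Fin n)) : Finset (Finset (Fin n)) :=
  insert A ((Finset.univ.filter (· ∉ A)).image fun i => cls T i \ A)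

lemma mem_classPartition {A B : Finset (Fin n)} :
    B ∈ classPartition T A ↔ B = A ∨ ∃ i ∉ A, B = cls T i \ A := by
  simp [classPartition, eq_comm]

lemma isRowPartition_classPartition {A : Finset (Fin n)} (hA : A.Nonempty) :
    IsRowPartition (classPartition T A) := by
  refine ⟨fun B hB => ?_, fun B hB B' hB' hne => ?_, fun i => ?_⟩
  · rcases (mem_classPartition T).1 hB with rfl | ⟨i, hi, rfl⟩
    exacts [hA, ⟨i, Finset.mem_sdiff.2 ⟨mem_cls_self T i, hi⟩⟩]
  · rcases (mem_classPartition T).1 hB with rfl | ⟨i, -, rfl⟩ <;>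
      rcases (mem_classPartition T).1 hB' with rfl | ⟨i', -, rfl⟩
    · exact absurd rfl hne
    · exact Finset.disjoint_sdiff
    · exact Finset.sdiff_disjoint
    · refine Finset.disjoint_left.2 fun x hx hx' => hne ?_
      rw [cls_eq_cls_of_mem_of_mem T (Finset.mem_sdiff.1 hx).1 (Finset.mem_sdiff.1 hx').1]
  · by_cases hi : i ∈ A
    · exact ⟨A, (mem_classPartition T).2 (Or.inl rfl), hi⟩
    · exact ⟨cls T i \ A, (mem_classPartition T).2 (Or.inr ⟨i, hi, rfl⟩),
        Finset.mem_sdiff.2 ⟨mem_cls_self T i, hi⟩⟩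

lemma partCost_classPartition_le (A : Finset (Fin n)) :
    partCost T (classPartition T A) ≤ m * A.card := by
  have hA : A ∉ (Finset.univ.filter (· ∉ A)).image fun i => cls T i \ A := by
    simp only [Finset.mem_image, Finset.mem_filter, Finset.mem_univ, true_and, not_exists,
      not_and]
    intro i hi he
    exact hi (he ▸ Finset.mem_sdiff.2 ⟨mem_cls_self T i, hi⟩)
  have hzero : ∀ B ∈ (Finset.univ.filter (· ∉ A)).image (fun i => cls T i \ A),
      suppCost T B = 0 := by
    simp only [Finset.mem_image]
    rintro _ ⟨i, -, rfl⟩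
    refine suppCost_eq_zero_of_pairwise_eq T fun x hx y hy => ?_
    rw [(mem_cls T).1 (Finset.mem_sdiff.1 hx).1, (mem_cls T).1 (Finset.mem_sdiff.1 hy).1]
  rw [partCost, classPartition, Finset.sum_insert hA, Finset.sum_eq_zero hzero, add_zero]
  simpa [mul_comm] using suppCost_le T A

def AdmitsAnonymousPartition (k c : ℕ) : Prop :=
  ∃ P : Finset (Finset (Fin n)),
    IsRowPartition P ∧ (∀ B ∈ P, k ≤ B.card) ∧ partCost T P ≤ c

lemma admitsAnonymousPartition_of_block {k : ℕ} (hk : 1 ≤ k) {A : Finset (Fin n)}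
    (hA : k ≤ A.card) (hout : ∀ i ∉ A, k ≤ (cls T i \ A).card) :
    AdmitsAnonymousPartition T k (m * A.card) := by
  refine ⟨classPartition T A,
    isRowPartition_classPartition T (Finset.card_pos.1 (by omega)), fun B hB => ?_,
    partCost_classPartition_le T A⟩
  rcases (mem_classPartition T).1 hB with rfl | ⟨i, hi, rfl⟩
  exacts [hA, hout i hi]

noncomputable def rareRows (k : ℕ) : Finset (Fin n) :=
  Finset.univ.filter fun i => (cls T i).card < k

noncomputable def largeClasses (k : ℕ) : Finset (Finset (Fin n)) :=
  (Finset.univ.image (cls T)).filter fun C => k ≤ C.card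

variable {k : ℕ}

lemma mem_rareRows {i : Fin n} : i ∈ rareRows T k ↔ (cls T i).card < k := by
  simp [rareRows]

lemma mem_largeClasses {C : Finset (Fin n)} :
    C ∈ largeClasses T k ↔ ∃ i, cls T i = C ∧ k ≤ C.card := by
  simp [largeClasses]

lemma disjoint_cls_rareRows {i : Fin n} (h : k ≤ (cls T i).card) :
    Disjoint (cls T i) (rareRows T k) :=
  Finset.disjoint_left.2 fun x hx hxr => by
    rw [mem_rareRows, cls_eq_of_mem T hx] at hxr
    omega

lemma pairwiseDisjoint_largeClasses :
    (largeClasses T k : Set (Finset (Fin n))).PairwiseDisjoint id := by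
  rintro _ hC _ hC' hne
  obtain ⟨i, rfl, -⟩ := (mem_largeClasses T).1 hC
  obtain ⟨i', rfl, -⟩ := (mem_largeClasses T).1 hC'
  exact disjoint_cls_of_ne T hne

lemma admitsAnonymousPartition_of_le_card_rareRows (hk : 1 ≤ k)
    (hB : k ≤ (rareRows T k).card) :
    AdmitsAnonymousPartition T k (m * (rareRows T k).card) := by
  refine admitsAnonymousPartition_of_block T hk hB fun i hi => ?_
  have hlarge : k ≤ (cls T i).card := not_lt.1 fun h => hi ((mem_rareRows T).2 h)
  rwa [Finset.sdiff_eq_self_of_disjoint (disjoint_cls_rareRows T hlarge)]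

lemma admitsAnonymousPartition_of_le_card_rareRows_add_surplus (hk : 1 ≤ k)
    (hBk : (rareRows T k).card < k)
    (hs : k ≤ (rareRows T k).card + ∑ C ∈ largeClasses T k, (C.card - k)) :
    AdmitsAnonymousPartition T k (m * k) := by
  obtain ⟨E, hEsub, hEcard, hEcls⟩ := exists_subset_biUnion_card_eq
    (pairwiseDisjoint_largeClasses T (k := k)) (fun C => C.card - k)
    (fun C _ => Nat.sub_le _ _)
    (t := k - (rareRows T k).card) (by omega)
  have hdisj : Disjoint (rareRows T k) E := by
    refine Finset.disjoint_right.2 fun x hx => ?_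
    obtain ⟨C, hC, hxC⟩ := Finset.mem_biUnion.1 (hEsub hx)
    obtain ⟨i, rfl, hlarge⟩ := (mem_largeClasses T).1 hC
    exact Finset.disjoint_left.1 (disjoint_cls_rareRows T hlarge) hxC
  have hA : (rareRows T k ∪ E).card = k := by
    rw [Finset.card_union_of_disjoint hdisj, hEcard]
    omega
  have hout : ∀ i ∉ rareRows T k ∪ E, k ≤ (cls T i \ (rareRows T k ∪ E)).card := by
    intro i hi
    have hlarge : k ≤ (cls T i).card :=
      not_lt.1 fun h => hi (Finset.mem_union_left _ ((mem_rareRows T).2 h))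
    have hsurplus := hEcls (cls T i) ((mem_largeClasses T).2 ⟨i, rfl, hlarge⟩)
    rw [Finset.sdiff_union_distrib, Finset.sdiff_eq_self_of_disjoint
      (disjoint_cls_rareRows T hlarge), Finset.inter_eq_right.2 Finset.sdiff_subset,
      Finset.card_sdiff, Finset.inter_comm]
    simp only [id] at hsurplus
    omega
  simpa only [hA] using admitsAnonymousPartition_of_block T hk hA.ge hout

lemma exists_large_cls (hkn : k ≤ n) (hB : (rareRows T k).card < k) :
    ∃ i, k ≤ (cls T i).card := by
  by_contra! h
  have huniv : rareRows T k = Finset.univ :=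
    Finset.eq_univ_iff_forall.2 fun i => (mem_rareRows T).2 (h i)
  rw [huniv, Finset.card_univ, Fintype.card_fin] at hB
  omega

lemma admitsAnonymousPartition_rareRows_union_cls (hk : 1 ≤ k) {i₀ : Fin n}
    (hi₀ : k ≤ (cls T i₀).card) :
    AdmitsAnonymousPartition T k (m * ((rareRows T k).card + (cls T i₀).card)) := by
  set A := rareRows T k ∪ cls T i₀
  have hout : ∀ i ∉ A, k ≤ (cls T i \ A).card := by
    intro i hi
    have hlarge : k ≤ (cls T i).card :=
      not_lt.1 fun h => hi (Finset.mem_union_left _ ((mem_rareRows T).2 h))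
    have hdisj : Disjoint (cls T i) A :=
      Finset.disjoint_union_right.2 ⟨disjoint_cls_rareRows T hlarge,
        disjoint_cls_of_not_mem T fun h => hi (Finset.mem_union_right _ h)⟩
    rwa [Finset.sdiff_eq_self_of_disjoint hdisj]
  obtain ⟨P, hP, hPk, hcost⟩ := admitsAnonymousPartition_of_block T hk
    (hi₀.trans (Finset.card_le_card Finset.subset_union_right)) hout
  exact ⟨P, hP, hPk, hcost.trans (Nat.mul_le_mul_left _ (Finset.card_union_le _ _))⟩

end Anonymization

theorem stmt17 {σ : Type*} (n m k : ℕ) (hk : 1 ≤ k) (hkn : k ≤ n)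
    (T : Fin n → Fin m → σ) :
    ((k ≤ (Finset.univ.filter (fun i : Fin n => (cls T i).card < k)).card →
      ∃ P : Finset (Finset (Fin n)), IsRowPartition P ∧ (∀ B ∈ P, k ≤ B.card) ∧
        partCost T P ≤
          m * (Finset.univ.filter (fun i : Fin n => (cls T i).card < k)).card) ∧
    ((0 < (Finset.univ.filter (fun i : Fin n => (cls T i).card < k)).card ∧
      (Finset.univ.filter (fun i : Fin n => (cls T i).card < k)).card < k ∧
      k ≤ (Finset.univ.filter (fun i : Fin n => (cls T i).card < k)).card +
        ∑ C ∈ (Finset.univ.image (cls T)).filter (fun C => k ≤ C.card), (C.card - k)) →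
      ∃ P : Finset (Finset (Fin n)), IsRowPartition P ∧ (∀ B ∈ P, k ≤ B.card) ∧
        partCost T P ≤ m * k) ∧
    ((0 < (Finset.univ.filter (fun i : Fin n => (cls T i).card < k)).card ∧
      (Finset.univ.filter (fun i : Fin n => (cls T i).card < k)).card +
        ∑ C ∈ (Finset.univ.image (cls T)).filter (fun C => k ≤ C.card), (C.card - k)
        < k) →
      (∃ i : Fin n, k ≤ (cls T i).card) ∧
      ∃ P : Finset (Finset (Fin n)), IsRowPartition P ∧ (∀ B ∈ P, k ≤ B.card) ∧
        partCost T P ≤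
          m * ((Finset.univ.filter (fun i : Fin n => (cls T i).card < k)).card +
            sInf {c : ℕ | ∃ i : Fin n, k ≤ (cls T i).card ∧ (cls T i).card = c}))) := by
  refine ⟨admitsAnonymousPartition_of_le_card_rareRows T hk,
    fun ⟨_, hBk, hs⟩ => admitsAnonymousPartition_of_le_card_rareRows_add_surplus T hk hBk hs,
    fun ⟨_, hlt⟩ => ?_⟩
  have hlarge : ∃ i, k ≤ (cls T i).card :=
    exists_large_cls T hkn (lt_of_le_of_lt (Nat.le_add_right _ _) hlt)
  obtain ⟨i₀, hi₀, hmin⟩ :=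
    Nat.sInf_mem (s := {c : ℕ | ∃ i : Fin n, k ≤ (cls T i).card ∧ (cls T i).card = c})
      (let ⟨i, hi⟩ := hlarge; ⟨_, i, hi, rfl⟩)
  refine ⟨hlarge, ?_⟩
  rw [← hmin]
  exact admitsAnonymousPartition_rareRows_union_cls T hk hi₀
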